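/- arXiv:2501.07552 — 6 statements merged into one kernel-verified Lean document; each statement's English description precedes it below -/
import Mathlib

section
/- For α ∈ (0,1/2), t ∈ [0,2], and real u with √(1-2α) ≤ u < 1, the bound |Ṽ_t^{(α)}(u)| = |(u-1)/(u+1)| e^{tu} · (u-1+2α)/(u+1-2α) ≤ α/(1-α) < 1 holds, where Ṽ_t^{(α)}(u) = ((u-1)(u-1+2α))/((u+1)(u+1-2α)) e^{tu}. -/
private lemma expAux : ∀ x : ℝ, 0 ≤ x → (1 - x) * Real.exp (2*x) ≤ 1 + x := by
  intro x hx
  have hmono : MonotoneOn (fun u : ℝ => (1+u)*Real.exp (-(2*u)) + u) (Set.Ici 0) := by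
    have hd : ∀ y : ℝ, HasDerivAt (fun u : ℝ => (1+u)*Real.exp (-(2*u)) + u)
        (Real.exp (-(2*y)) + (1+y)*(Real.exp (-(2*y)) * (-2)) + 1) y := by
      intro y
      have h1 : HasDerivAt (fun u : ℝ => -(2*u)) (-2) y := by
        have h := ((hasDerivAt_id' y).const_mul (2:ℝ)).neg; simp only [mul_one] at h; exact h
      have h2 : HasDerivAt (fun u : ℝ => Real.exp (-(2*u))) (Real.exp (-(2*y)) * (-2)) y :=
        (Real.hasDerivAt_exp _).comp y h1
      have h3 : HasDerivAt (fun u : ℝ => (1+u)) 1 y := by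
        simpa using (hasDerivAt_id y).const_add (1:ℝ)
      have := (h3.mul h2).add (hasDerivAt_id' y)
      simp only [one_mul] at this; exact this
    apply monotoneOn_of_deriv_nonneg (convex_Ici 0)
    · exact Continuous.continuousOn (by continuity)
    · intro y _
      exact (hd y).differentiableAt.differentiableWithinAt
    · intro y hy
      rw [interior_Ici] at hy
      rw [(hd y).deriv]
      have h1 : (1 + 2*y) ≤ Real.exp (2*y) := by
        have := Real.add_one_le_exp (2*y); linarith
      have h2 : (1 + 2*y) * Real.exp (-(2*y)) ≤ 1 := by
        rw [Real.exp_neg]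
        rw [mul_inv_le_iff₀ (Real.exp_pos _), one_mul]
        exact h1
      have hy' : (0:ℝ) ≤ y := le_of_lt hy
      nlinarith [Real.exp_pos (-(2*y))]
  have h0 : (fun u : ℝ => (1+u)*Real.exp (-(2*u)) + u) 0 ≤
      (fun u : ℝ => (1+u)*Real.exp (-(2*u)) + u) x :=
    hmono (Set.self_mem_Ici) hx hx
  simp only [Real.exp_zero] at h0
  have h0' : (1:ℝ) ≤ (1+x)*Real.exp (-(2*x)) + x := by simpa using h0
  have hpos := Real.exp_pos (2*x)
  have hee : Real.exp (-(2*x)) * Real.exp (2*x) = 1 := by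
    rw [← Real.exp_add]; ring_nf; exact Real.exp_zero
  nlinarith [hpos]

/-- Bound on `|Ṽ_t^{(α)}(u)|` for `α < 1/2`, `t ∈ [0,2]` and `√(1-2α) ≤ u < 1`. -/
theorem stmt_4 (α t u : ℝ) (hα : α ∈ Set.Ioo (0:ℝ) (1/2))
    (ht : t ∈ Set.Icc (0:ℝ) 2) (hu : u ∈ Set.Ico (Real.sqrt (1 - 2*α)) 1) :
    |((u - 1) * (u - 1 + 2*α)) / ((u + 1) * (u + 1 - 2*α)) * Real.exp (t*u)|
        ≤ α / (1 - α)
      ∧ α / (1 - α) < 1 := by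
  obtain ⟨hα0, hα2⟩ := hα
  obtain ⟨ht0, ht2⟩ := ht
  obtain ⟨hu1, hu2⟩ := hu
  have h2α : 0 < 1 - 2*α := by linarith
  -- u ≥ 0
  have hu0 : 0 ≤ u := le_trans (Real.sqrt_nonneg _) hu1
  -- u ≥ 1 - 2α
  have husq : 1 - 2*α ≤ Real.sqrt (1 - 2*α) := by
    have hs := Real.sq_sqrt h2α.le
    have hn := Real.sqrt_nonneg (1 - 2*α)
    nlinarith [sq_nonneg (1 - Real.sqrt (1 - 2*α)), sq_nonneg (Real.sqrt (1 - 2*α))]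
  have hub : 1 - 2*α ≤ u := le_trans husq hu1
  -- pieces
  have ha : 0 ≤ u - 1 + 2*α := by linarith
  have hd1 : 0 < u + 1 := by linarith
  have hd2 : 0 < u + 1 - 2*α := by linarith
  have hd : 0 < (u + 1) * (u + 1 - 2*α) := mul_pos hd1 hd2
  have hexp : 0 < Real.exp (t*u) := Real.exp_pos _
  have hnum : (u - 1) * (u - 1 + 2*α) ≤ 0 :=
    mul_nonpos_of_nonpos_of_nonneg (by linarith) ha
  -- the expression is nonpositive
  have hexpr : ((u - 1) * (u - 1 + 2*α)) / ((u + 1) * (u + 1 - 2*α)) * Real.exp (t*u) ≤ 0 :=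
    mul_nonpos_of_nonpos_of_nonneg (div_nonpos_of_nonpos_of_nonneg hnum hd.le) hexp.le
  have habs : |((u - 1) * (u - 1 + 2*α)) / ((u + 1) * (u + 1 - 2*α)) * Real.exp (t*u)|
      = ((1 - u) * (u - 1 + 2*α)) / ((u + 1) * (u + 1 - 2*α)) * Real.exp (t*u) := by
    rw [abs_of_nonpos hexpr]; ring
  -- key exponential bound: (1-u) exp(tu) ≤ 1+u
  have hkey : (1 - u) * Real.exp (t*u) ≤ 1 + u := by
    have h1 : Real.exp (t*u) ≤ Real.exp (2*u) :=
      Real.exp_le_exp.mpr (by nlinarith)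
    have h2 := expAux u hu0
    nlinarith [Real.exp_pos (t*u)]
  constructor
  · rw [habs]
    have step1 : ((1 - u) * (u - 1 + 2*α)) / ((u + 1) * (u + 1 - 2*α)) * Real.exp (t*u)
        ≤ (u - 1 + 2*α) / (u + 1 - 2*α) := by
      rw [div_mul_eq_mul_div, div_le_div_iff₀ hd hd2]
      have : (1 - u) * Real.exp (t*u) * (u - 1 + 2*α) ≤ (1 + u) * (u - 1 + 2*α) :=
        mul_le_mul_of_nonneg_right hkey ha
      nlinarith
    refine le_trans step1 ?_
    rw [div_le_div_iff₀ hd2 (by linarith : (0:ℝ) < 1 - α)]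
    nlinarith
  · rw [div_lt_one (by linarith)]; linarith
end

section
/- For α ∈ [1/2,1) and t ≥ t₁(α) = (α+√(2α-1))/(α(1-α)), the real numbers Z_±^{(α)}(t) = (-(1-α)(1+αt) ± √(Δ_t^{(α)}))/(2t), where Δ_t^{(α)} = (1-α)((1-α)(1+αt)² - 2αt) ≥ 0, both satisfy Z_±^{(α)}(t) ≥ -1/4. -/
/-- For `t ≥ t₁(α)`, both roots `Z_±^{(α)}(t)` are at least `-1/4`. -/
theorem stmt_8 (α t : ℝ) (hα : α ∈ Set.Ico (1/2 : ℝ) 1)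
    (ht : (α + Real.sqrt (2*α - 1)) / (α*(1 - α)) ≤ t) :
    (let Δ : ℝ := (1 - α)*((1 - α)*(1 + α*t)^2 - 2*α*t);
     -(1:ℝ)/4 ≤ (-(1 - α)*(1 + α*t) + Real.sqrt Δ) / (2*t) ∧
     -(1:ℝ)/4 ≤ (-(1 - α)*(1 + α*t) - Real.sqrt Δ) / (2*t)) := by
  obtain ⟨hα1, hα2⟩ := hα
  have h1 : (0:ℝ) < 1 - α := by linarith
  have h2 : (0:ℝ) < α := by linarith
  have hd : (0:ℝ) < α * (1 - α) := mul_pos h2 h1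
  have hs : 0 ≤ Real.sqrt (2*α - 1) := Real.sqrt_nonneg _
  have ht' : α + Real.sqrt (2*α - 1) ≤ t * (α * (1 - α)) := (div_le_iff₀ hd).mp ht
  have ht3 : 1 ≤ t * (1 - α) := by nlinarith
  have hpos : 0 < t := by nlinarith
  intro Δ
  have h0 : 0 ≤ t/2 - (1 - α)*(1 + α*t) := by
    have e1 : 0 ≤ t * (α - 1/2) := mul_nonneg hpos.le (by linarith)
    have e2 : (1 - α) ≤ t * (1 - α) * (1 - α) :=
      le_mul_of_one_le_left h1.le ht3 |>.trans_eq (by ring)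
    nlinarith [e2]
  have hΔle : Δ ≤ (t/2 - (1 - α)*(1 + α*t))^2 := by
    have e1 : 0 ≤ t^2 * (α - 1/2)^2 := mul_nonneg (sq_nonneg t) (sq_nonneg _)
    have e2 : 0 ≤ t * ((1 - α) * (2*α - 1)) :=
      mul_nonneg hpos.le (mul_nonneg h1.le (by linarith))
    show (1 - α)*((1 - α)*(1 + α*t)^2 - 2*α*t) ≤ _
    nlinarith [e1, e2]
  have hkey : Real.sqrt Δ ≤ t/2 - (1 - α)*(1 + α*t) := by
    calc Real.sqrt Δ ≤ Real.sqrt ((t/2 - (1 - α)*(1 + α*t))^2) := Real.sqrt_le_sqrt hΔle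
      _ = |t/2 - (1 - α)*(1 + α*t)| := Real.sqrt_sq_eq_abs _
      _ = t/2 - (1 - α)*(1 + α*t) := abs_of_nonneg h0
  have hsq : 0 ≤ Real.sqrt Δ := Real.sqrt_nonneg _
  have h2t : (0:ℝ) < 2*t := by linarith
  constructor
  · rw [le_div_iff₀ h2t]; nlinarith
  · rw [le_div_iff₀ h2t]; nlinarith
end

section
/- For α ∈ (1/2,1) and t ∈ (0, t₀(α)], with Z_+^{(α)}(t) = (-(1-α)(1+αt) + √(Δ_t^{(α)}))/(2t) and Δ_t^{(α)} = (1-α)((1-α)(1+αt)² - 2αt) ≥ 0, the strict inequality Z_+^{(α)}(t) < -1/4 holds; consequently Z_-^{(α)}(t) ≤ Z_+^{(α)}(t) < -1/4. -/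
/-!
Write `b = (1-α)(1+αt)`, so that `Z_+ < -1/4` amounts to `√Δ < b - t/2`. Completing the square,
`(b - t/2)² - Δ = t((1-α)(2α-1) + t(α-1/2)²)`, which is positive for `α > 1/2`, `t > 0`; so it
remains to see `b - t/2 > 0`. Since `(α - √(2α-1))(α + √(2α-1)) = (1-α)²`, the bound `t ≤ t₀(α)`
reads `tα(α + √(2α-1)) ≤ 1-α`, and this dominates `t(α² - α + 1/2)`.
-/

namespace StrictBound

lemma sub_sqrt_mul_add_sqrt {α : ℝ} (hα : 1/2 ≤ α) :
    (α - Real.sqrt (2*α - 1)) * (α + Real.sqrt (2*α - 1)) = (1 - α)^2 := by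
  have hs : Real.sqrt (2*α - 1) ^ 2 = 2*α - 1 := Real.sq_sqrt (by linarith)
  linear_combination -hs

lemma mul_add_sqrt_le_of_le_t₀ {α t : ℝ} (hα : α ∈ Set.Ioo (1/2 : ℝ) 1)
    (ht : t ≤ (α - Real.sqrt (2*α - 1)) / (α*(1 - α))) :
    t * (α * (α + Real.sqrt (2*α - 1))) ≤ 1 - α := by
  obtain ⟨hα₁, hα₂⟩ := hα
  have hs := Real.sqrt_nonneg (2*α - 1)
  have hαs : 0 < α + Real.sqrt (2*α - 1) := by linarith
  have ht' : t * (α*(1 - α)) ≤ α - Real.sqrt (2*α - 1) :=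
    (le_div_iff₀ (by nlinarith)).mp ht
  have key : t * (α * (α + Real.sqrt (2*α - 1))) * (1 - α) ≤ (1 - α) * (1 - α) := by
    calc t * (α * (α + Real.sqrt (2*α - 1))) * (1 - α)
        = t * (α*(1 - α)) * (α + Real.sqrt (2*α - 1)) := by ring
      _ ≤ (α - Real.sqrt (2*α - 1)) * (α + Real.sqrt (2*α - 1)) := by gcongr
      _ = (1 - α) * (1 - α) := by rw [sub_sqrt_mul_add_sqrt hα₁.le]; ring
  exact le_of_mul_le_mul_right key (by linarith)

lemma half_lt_one_sub_mul {α t : ℝ} (hα : α ∈ Set.Ioo (1/2 : ℝ) 1) (ht0 : 0 < t)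
    (ht : t ≤ (α - Real.sqrt (2*α - 1)) / (α*(1 - α))) :
    t / 2 < (1 - α)*(1 + α*t) := by
  have hbound := mul_add_sqrt_le_of_le_t₀ hα ht
  have hcoef : α^2 - α + 1/2 < α * (α + Real.sqrt (2*α - 1)) := by
    nlinarith [hα.1, Real.sqrt_nonneg (2*α - 1)]
  nlinarith [mul_lt_mul_of_pos_left hcoef ht0]

lemma sq_sub_discr (α t : ℝ) :
    ((1 - α)*(1 + α*t) - t/2)^2 - (1 - α)*((1 - α)*(1 + α*t)^2 - 2*α*t)
      = t * ((1 - α)*(2*α - 1) + t*(α - 1/2)^2) := by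
  ring

lemma sqrt_discr_lt {α t : ℝ} (hα : α ∈ Set.Ioo (1/2 : ℝ) 1) (ht0 : 0 < t)
    (ht : t ≤ (α - Real.sqrt (2*α - 1)) / (α*(1 - α))) :
    Real.sqrt ((1 - α)*((1 - α)*(1 + α*t)^2 - 2*α*t)) < (1 - α)*(1 + α*t) - t/2 := by
  have hpos : 0 < t * ((1 - α)*(2*α - 1) + t*(α - 1/2)^2) := by
    have : 0 < (1 - α)*(2*α - 1) := mul_pos (by linarith [hα.2]) (by linarith [hα.1])
    positivity
  rw [Real.sqrt_lt' (by linarith [half_lt_one_sub_mul hα ht0 ht])]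
  linarith [sq_sub_discr α t]

end StrictBound

/-- For `α ∈ (1/2,1)` and `0 < t ≤ t₀(α)`, `Z_-^{(α)}(t) ≤ Z_+^{(α)}(t) < -1/4`. -/
theorem stmt_10 (α t : ℝ) (hα : α ∈ Set.Ioo (1/2 : ℝ) 1) (ht0 : 0 < t)
    (ht : t ≤ (α - Real.sqrt (2*α - 1)) / (α*(1 - α))) :
    (let Δ : ℝ := (1 - α)*((1 - α)*(1 + α*t)^2 - 2*α*t);
     (-(1 - α)*(1 + α*t) + Real.sqrt Δ) / (2*t) < -(1:ℝ)/4 ∧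
     (-(1 - α)*(1 + α*t) - Real.sqrt Δ) / (2*t)
       ≤ (-(1 - α)*(1 + α*t) + Real.sqrt Δ) / (2*t)) := by
  intro Δ
  have hsqrt : Real.sqrt Δ < (1 - α)*(1 + α*t) - t/2 := StrictBound.sqrt_discr_lt hα ht0 ht
  constructor
  · rw [div_lt_iff₀ (by positivity)]
    linarith
  · gcongr
    linarith [Real.sqrt_nonneg Δ]
end

section
/- For α ∈ (1/2,1) and t ≥ t₁(α), one has 2tα(1-α) ≥ (1-α)(1+αt) + √(Δ_t^{(α)}), where Δ_t^{(α)} = (1-α)((1-α)(1+αt)² - 2αt). -/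
/-- For `α ∈ (1/2,1)` and `t ≥ t₁(α)`,
`2tα(1-α) ≥ (1-α)(1+αt) + √(Δ_t^{(α)})`. -/
theorem stmt_11 (α t : ℝ) (hα : α ∈ Set.Ioo (1/2 : ℝ) 1)
    (ht : (α + Real.sqrt (2*α - 1)) / (α*(1 - α)) ≤ t) :
    (1 - α)*(1 + α*t) + Real.sqrt ((1 - α)*((1 - α)*(1 + α*t)^2 - 2*α*t))
      ≤ 2*t*α*(1 - α) := by
  obtain ⟨h1, h2⟩ := hα
  have hs := Real.sqrt_nonneg (2*α - 1)
  have hden : 0 < α*(1 - α) := by nlinarith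
  have ht2 : α + Real.sqrt (2*α - 1) ≤ α*(1 - α)*t := by
    rw [div_le_iff₀ hden] at ht; linarith
  have h3 : 1 ≤ α*t := by nlinarith
  have key : Real.sqrt ((1 - α)*((1 - α)*(1 + α*t)^2 - 2*α*t)) ≤ (1 - α)*(α*t - 1) := by
    have hsq : (1 - α)*((1 - α)*(1 + α*t)^2 - 2*α*t) ≤ ((1 - α)*(α*t - 1))^2 := by
      nlinarith [mul_pos (show (0:ℝ) < α*t by linarith) (show (0:ℝ) < 1 - α by linarith)]
    calc Real.sqrt ((1 - α)*((1 - α)*(1 + α*t)^2 - 2*α*t))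
        ≤ Real.sqrt (((1 - α)*(α*t - 1))^2) := Real.sqrt_le_sqrt hsq
      _ = (1 - α)*(α*t - 1) := Real.sqrt_sq (by nlinarith)
  nlinarith [key]
end

section
/- With x = (2α-1)^{1/4} for α ∈ (1/2,1) and t ≥ 2, one has Ṽ_t^{(α)}(x) = -((x²-x+1)/(x²+x+1)) e^{tx}, and the function x ↦ -((x²-x+1)/(x²+x+1)) e^{tx} is decreasing on [0,1] when t ≥ 2; hence Ṽ_t^{(α)}((2α-1)^{1/4}) ≤ -1. -/
/-!
Substituting `2α = x⁴ + 1` and factoring `x⁴ + x = x (x + 1) (x² - x + 1)` and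
`x - x⁴ = x (1 - x) (x² + x + 1)` collapses `Ṽ_t^{(α)}(x)` to
`-((x² - x + 1)/(x² + x + 1)) e^{tx}`. The numerator of the derivative of the latter is
`-(2 (y² - 1) + t (y⁴ + y² + 1)) e^{ty}`, which for `t ≥ 2` is at most `-(2y⁴ + 4y²) e^{ty} ≤ 0`,
so the function is antitone on all of `ℝ` and its value at `x ≥ 0` is at most its value `-1` at `0`.
-/

open Real

noncomputable def ratioExp (t y : ℝ) : ℝ :=
  -((y ^ 2 - y + 1) / (y ^ 2 + y + 1)) * exp (t * y)

lemma sq_add_add_one_pos (y : ℝ) : 0 < y ^ 2 + y + 1 := by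
  nlinarith [sq_nonneg (2 * y + 1)]

lemma quartic_ratio_eq {x : ℝ} (hx0 : x ≠ 0) (hx1 : x ≠ 1) (hxm : x ≠ -1) :
    ((x - 1) * (x - 1 + (x ^ 4 + 1))) / ((x + 1) * (x + 1 - (x ^ 4 + 1)))
      = -((x ^ 2 - x + 1) / (x ^ 2 + x + 1)) := by
  have hx1' : 1 - x ≠ 0 := sub_ne_zero.2 hx1.symm
  have hxm' : x + 1 ≠ 0 := by rwa [Ne, add_eq_zero_iff_eq_neg]
  have hq := (sq_add_add_one_pos x).ne'
  rw [show x - 1 + (x ^ 4 + 1) = x * (x + 1) * (x ^ 2 - x + 1) by ring,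
    show x + 1 - (x ^ 4 + 1) = x * (1 - x) * (x ^ 2 + x + 1) by ring]
  field_simp
  ring

lemma hasDerivAt_ratioExp (t y : ℝ) :
    HasDerivAt (ratioExp t)
      (-((2 * (y ^ 2 - 1) + t * (y ^ 4 + y ^ 2 + 1)) / (y ^ 2 + y + 1) ^ 2) * exp (t * y)) y := by
  have hq := (sq_add_add_one_pos y).ne'
  have hnum : HasDerivAt (fun y : ℝ => y ^ 2 - y + 1) (2 * y - 1) y := by
    simpa using ((hasDerivAt_pow 2 y).sub (hasDerivAt_id y)).add_const 1
  have hden : HasDerivAt (fun y : ℝ => y ^ 2 + y + 1) (2 * y + 1) y := by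
    simpa using ((hasDerivAt_pow 2 y).add (hasDerivAt_id y)).add_const 1
  have hexp : HasDerivAt (fun y : ℝ => exp (t * y)) (exp (t * y) * t) y := by
    simpa using ((hasDerivAt_id y).const_mul t).exp
  refine ((hnum.fun_div hden hq).fun_neg.fun_mul hexp).congr_deriv ?_
  field_simp
  ring

lemma ratioExp_antitone {t : ℝ} (ht : 2 ≤ t) : Antitone (ratioExp t) := by
  refine antitone_of_deriv_nonpos (fun y => (hasDerivAt_ratioExp t y).differentiableAt) fun y => ?_
  rw [(hasDerivAt_ratioExp t y).deriv, neg_mul]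
  have hnum : 0 ≤ 2 * (y ^ 2 - 1) + t * (y ^ 4 + y ^ 2 + 1) := by
    nlinarith [sq_nonneg y, sq_nonneg (y ^ 2)]
  exact neg_nonpos.2 (mul_nonneg (by positivity) (exp_pos _).le)

lemma ratioExp_zero (t : ℝ) : ratioExp t 0 = -1 := by
  simp [ratioExp]

/-- With `x = (2α-1)^{1/4}`, one has
`Ṽ_t^{(α)}(x) = -((x²-x+1)/(x²+x+1)) e^{tx}`, the latter expression is
decreasing in `x` on `[0,1]` for `t ≥ 2`, and `Ṽ_t^{(α)}(x) ≤ -1`. -/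
theorem stmt_16 (α t : ℝ) (hα : α ∈ Set.Ioo (1/2 : ℝ) 1) (ht : 2 ≤ t) :
    (let x : ℝ := (2*α - 1) ^ ((1:ℝ)/4);
     ((x - 1)*(x - 1 + 2*α)) / ((x + 1)*(x + 1 - 2*α)) * Real.exp (t*x)
        = -((x^2 - x + 1)/(x^2 + x + 1)) * Real.exp (t*x) ∧
     AntitoneOn (fun y : ℝ => -((y^2 - y + 1)/(y^2 + y + 1)) * Real.exp (t*y))
        (Set.Icc (0:ℝ) 1) ∧
     ((x - 1)*(x - 1 + 2*α)) / ((x + 1)*(x + 1 - 2*α)) * Real.exp (t*x) ≤ -1) := by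
  obtain ⟨hα1, hα2⟩ := hα
  intro x
  have hb0 : 0 < 2 * α - 1 := by linarith
  have hx0 : 0 < x := rpow_pos_of_pos hb0 _
  have hx1 : x < 1 := rpow_lt_one hb0.le (by linarith) (by norm_num)
  have h2α : 2 * α = x ^ 4 + 1 := by
    rw [← rpow_natCast, ← rpow_mul hb0.le]
    norm_num
  have heq : ((x - 1)*(x - 1 + 2*α)) / ((x + 1)*(x + 1 - 2*α)) * exp (t*x) = ratioExp t x := by
    rw [h2α, quartic_ratio_eq hx0.ne' hx1.ne (by linarith), ratioExp]
  refine ⟨heq, (ratioExp_antitone ht).antitoneOn _, ?_⟩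
  rw [heq, ← ratioExp_zero t]
  exact ratioExp_antitone ht hx0.le
end

section
/- Let Q₁, Q₂ be orthogonal projections in a tracial von Neumann (or C*-) probability space (𝒜, τ) with τ(Q₁) = τ(Q₂) = α. Then for every j ≥ 1, τ((Q₁ + Q₂ - 1)^{2j}) = 2 τ((Q₁Q₂Q₁)^j) - (2α - 1). -/
/-!
With `S = Q₁ + Q₂ - 1` and `R = Q₁ - Q₂` one has `R S = -S R` and `R² + S² = 1`, and `S²`
commutes with `Q₁`, so `Q₁ S^{2j} = (Q₁Q₂Q₁)^j`. Traciality kills the trace of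
anything of the form `xy` with `xy = -yx`; this gives `τ(R S^{2j}) = 0`, i.e. `Q₁` and `Q₂`
compress `S^{2j}` to elements of equal trace, and `τ(S^{2k+1}R²) = 0`, i.e. the odd moments
of `S` are all equal to `τ(S) = 2α - 1`. Writing `1 = Q₁ + Q₂ - S` in front of `S^{2j}` gives
`τ(S^{2j}) = 2τ((Q₁Q₂Q₁)^j) - τ(S^{2j+1})`.
-/

section Projections

variable {A : Type*} [Ring A] {P Q : A}

lemma IsIdempotentElem.sub_mul_add_sub_one (hP : IsIdempotentElem P) (hQ : IsIdempotentElem Q) :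
    (P - Q) * (P + Q - 1) = -((P + Q - 1) * (P - Q)) := by
  linear_combination (norm := noncomm_ring) 2 * hP.eq - 2 * hQ.eq

lemma IsIdempotentElem.sub_sq_add_add_sub_one_sq (hP : IsIdempotentElem P)
    (hQ : IsIdempotentElem Q) : (P - Q) ^ 2 + (P + Q - 1) ^ 2 = 1 := by
  linear_combination (norm := noncomm_ring) 2 * hP.eq + 2 * hQ.eq

lemma IsIdempotentElem.mul_add_sub_one_sq (hP : IsIdempotentElem P) (hQ : IsIdempotentElem Q) :
    P * (P + Q - 1) ^ 2 = P * Q * P := by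
  linear_combination (norm := noncomm_ring) hP.eq * P + hP.eq * Q + P * hQ.eq - hP.eq

lemma IsIdempotentElem.add_sub_one_sq_mul (hP : IsIdempotentElem P) (hQ : IsIdempotentElem Q) :
    (P + Q - 1) ^ 2 * P = P * Q * P := by
  linear_combination (norm := noncomm_ring) P * hP.eq + Q * hP.eq + hQ.eq * P - hP.eq

lemma IsIdempotentElem.commute_add_sub_one_sq (hP : IsIdempotentElem P)
    (hQ : IsIdempotentElem Q) : Commute P ((P + Q - 1) ^ 2) :=
  (hP.mul_add_sub_one_sq hQ).trans (hP.add_sub_one_sq_mul hQ).symm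

lemma IsIdempotentElem.mul_add_sub_one_pow_two_mul (hP : IsIdempotentElem P)
    (hQ : IsIdempotentElem Q) {j : ℕ} (hj : j ≠ 0) :
    P * (P + Q - 1) ^ (2 * j) = (P * Q * P) ^ j := by
  obtain ⟨k, rfl⟩ := Nat.exists_eq_succ_of_ne_zero hj
  rw [← hP.mul_add_sub_one_sq hQ, (hP.commute_add_sub_one_sq hQ).mul_pow, hP.pow_succ_eq, pow_mul]

end Projections

section Trace

variable {𝕜 A : Type*} [Field 𝕜] [CharZero 𝕜] [Ring A] [Algebra 𝕜 A] (τ : A →ₗ[𝕜] 𝕜)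
  (htr : ∀ x y : A, τ (x * y) = τ (y * x))
include htr

lemma trace_mul_eq_zero_of_mul_eq_neg {x y : A} (h : x * y = -(y * x)) : τ (x * y) = 0 := by
  have h' := congrArg τ h
  rw [map_neg, htr y x] at h'
  linear_combination h' / 2

variable {R S : A} (hRS : R * S = -(S * R))
include hRS

lemma trace_mul_pow_succ_eq_zero_of_anticomm (n : ℕ) : τ (R * S ^ (n + 1)) = 0 := by
  rw [pow_succ, ← mul_assoc]
  apply trace_mul_eq_zero_of_mul_eq_neg τ htr
  rw [← mul_assoc, ← neg_mul, ← hRS, mul_assoc, mul_assoc, ← pow_succ, ← pow_succ']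

lemma trace_pow_add_two_eq_of_anticomm (hsq : R ^ 2 + S ^ 2 = 1) {n : ℕ} (hn : Odd n) :
    τ (S ^ (n + 2)) = τ (S ^ n) := by
  have hR_odd : R * S ^ n = -(S ^ n * R) := by
    have hsemi : SemiconjBy R S (-S) := by rw [SemiconjBy, neg_mul, ← hRS]
    rw [(hsemi.pow_right n).eq, hn.neg_pow, neg_mul]
  have hzero : τ (S ^ n * R * R) = 0 :=
    trace_mul_eq_zero_of_mul_eq_neg τ htr (by rw [← mul_assoc, hR_odd, neg_mul, neg_neg])
  calc τ (S ^ (n + 2)) = τ (S ^ n * (1 - R ^ 2)) := by rw [pow_add, eq_sub_of_add_eq' hsq]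
    _ = τ (S ^ n) - τ (S ^ n * R * R) := by rw [mul_sub, mul_one, map_sub, sq, mul_assoc]
    _ = τ (S ^ n) := by rw [hzero, sub_zero]

lemma trace_pow_two_mul_add_one_of_anticomm (hsq : R ^ 2 + S ^ 2 = 1) (k : ℕ) :
    τ (S ^ (2 * k + 1)) = τ S := by
  induction k with
  | zero => simp
  | succ k ih =>
    rw [show 2 * (k + 1) + 1 = 2 * k + 1 + 2 by ring,
      trace_pow_add_two_eq_of_anticomm τ htr hRS hsq (odd_two_mul_add_one k), ih]

end Trace

theorem stmt_19_general {A : Type*} [Ring A] [Algebra ℂ A]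
    (τ : A →ₗ[ℂ] ℂ) (hτ1 : τ 1 = 1) (htr : ∀ x y : A, τ (x*y) = τ (y*x))
    (Q₁ Q₂ : A) (hQ₁ : Q₁*Q₁ = Q₁) (hQ₂ : Q₂*Q₂ = Q₂)
    (α : ℂ) (hα₁ : τ Q₁ = α) (hα₂ : τ Q₂ = α) :
    ∀ j : ℕ, 1 ≤ j →
      τ ((Q₁ + Q₂ - 1)^(2*j)) = 2 * τ ((Q₁*Q₂*Q₁)^j) - (2*α - 1) := by
  intro j hj
  set S := Q₁ + Q₂ - 1
  have hanti := IsIdempotentElem.sub_mul_add_sub_one hQ₁ hQ₂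
  have hsq := IsIdempotentElem.sub_sq_add_add_sub_one_sq hQ₁ hQ₂
  have hcompress : τ (Q₂ * S ^ (2 * j)) = τ (Q₁ * S ^ (2 * j)) := by
    have := trace_mul_pow_succ_eq_zero_of_anticomm τ htr hanti (2 * j - 1)
    rwa [Nat.sub_add_cancel (by omega), sub_mul, map_sub, sub_eq_zero, eq_comm] at this
  have hodd : τ (S ^ (2 * j + 1)) = 2 * α - 1 := by
    rw [trace_pow_two_mul_add_one_of_anticomm τ htr hanti hsq, map_sub, map_add, hτ1, hα₁, hα₂]
    ring
  calc τ (S ^ (2 * j)) = τ ((Q₁ + Q₂ - S) * S ^ (2 * j)) := by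
        rw [show Q₁ + Q₂ - S = 1 by simp [S], one_mul]
    _ = 2 * τ (Q₁ * S ^ (2 * j)) - τ (S ^ (2 * j + 1)) := by
      rw [sub_mul, add_mul, map_sub, map_add, hcompress, ← pow_succ']
      ring
    _ = 2 * τ ((Q₁ * Q₂ * Q₁) ^ j) - (2 * α - 1) := by
      rw [IsIdempotentElem.mul_add_sub_one_pow_two_mul hQ₁ hQ₂ (by omega), hodd]

/-- Demni–Hamdi identity: for any two orthogonal projections `Q₁, Q₂` of common
trace `α` in a tracial noncommutative probability space (no freeness assumed),
`τ((Q₁+Q₂-1)^{2j}) = 2τ((Q₁Q₂Q₁)^j) - (2α-1)` for all `j ≥ 1`. -/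
theorem stmt_19 {A : Type*} [Ring A] [StarRing A] [Algebra ℂ A]
    (τ : A →ₗ[ℂ] ℂ) (hτ1 : τ 1 = 1) (htr : ∀ x y : A, τ (x*y) = τ (y*x))
    (Q₁ Q₂ : A) (hQ₁ : Q₁*Q₁ = Q₁) (hQ₂ : Q₂*Q₂ = Q₂)
    (hs₁ : star Q₁ = Q₁) (hs₂ : star Q₂ = Q₂)
    (α : ℂ) (hα₁ : τ Q₁ = α) (hα₂ : τ Q₂ = α) :
    ∀ j : ℕ, 1 ≤ j →
      τ ((Q₁ + Q₂ - 1)^(2*j)) = 2 * τ ((Q₁*Q₂*Q₁)^j) - (2*α - 1) :=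
  stmt_19_general τ hτ1 htr Q₁ Q₂ hQ₁ hQ₂ α hα₁ hα₂
end
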